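/- arXiv:1310.3002 — 4 statements merged into one kernel-verified Lean document; each statement's English description precedes it below -/
import Mathlib

section
/- Let A, F, h_A, h_F, m_A, m_F, g be real numbers with g ≥ 0, A, F > 0, A ≤ F, h_A ≥ h_F, where m_A = √(A/(16π))·(1 - g - (h_A - 4A)/(16π)) and m_F = √(F/(16π))·(1 - g - (h_F - 4F)/(16π)). If m_A ≥ -8(16π)^{-3/2} A^{3/2}, then m_F ≥ m_A. -/
open Real

/-- Jump-time monotonicity of the Hawking mass: with areas `0 < A ≤ F`,
`∫H²`-values `h_A ≥ h_F`, genus parameter `g ≥ 0`, and Hawking masses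
`m_A = √(A/(16π))(1 - g - (h_A - 4A)/(16π))`, `m_F = √(F/(16π))(1 - g - (h_F - 4F)/(16π))`,
if `m_A ≥ -8(16π)^{-3/2}A^{3/2}` then `m_F ≥ m_A`. -/
theorem hawking_mass_jump (A F hA hF mA mF g : ℝ)
    (hg : 0 ≤ g) (hApos : 0 < A) (hFpos : 0 < F) (hAF : A ≤ F) (hh : hF ≤ hA)
    (hmA : mA = Real.sqrt (A / (16 * Real.pi)) * (1 - g - (hA - 4 * A) / (16 * Real.pi)))
    (hmF : mF = Real.sqrt (F / (16 * Real.pi)) * (1 - g - (hF - 4 * F) / (16 * Real.pi)))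
    (hlow : -(8 * A ^ ((3 : ℝ) / 2) / (16 * Real.pi) ^ ((3 : ℝ) / 2)) ≤ mA) :
    mA ≤ mF := by
  have hπ : 0 < Real.pi := Real.pi_pos
  set P : ℝ := 16 * Real.pi with hPdef
  have hP : 0 < P := by positivity
  have hP0 : P ≠ 0 := hP.ne'
  set s := Real.sqrt (A / P) with hsdef
  set t := Real.sqrt (F / P) with htdef
  have hs2 : s ^ 2 = A / P := Real.sq_sqrt (by positivity)
  have ht2 : t ^ 2 = F / P := Real.sq_sqrt (by positivity)
  have hspos : 0 < s := Real.sqrt_pos.mpr (by positivity)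
  have htpos : 0 < t := Real.sqrt_pos.mpr (by positivity)
  have hst : s ≤ t := Real.sqrt_le_sqrt (by gcongr)
  have hcube : 8 * A ^ ((3 : ℝ) / 2) / P ^ ((3 : ℝ) / 2) = 8 * s ^ 3 := by
    rw [mul_div_assoc, ← Real.div_rpow hApos.le hP.le, hsdef, Real.sqrt_eq_rpow,
      ← Real.rpow_natCast ((A / P) ^ ((1 : ℝ) / 2)) 3,
      ← Real.rpow_mul (by positivity)]
    norm_num
  rw [hcube] at hlow
  have hmA' : mA = s * (1 - g - hA / P + 4 * s ^ 2) := by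
    rw [hmA, hs2]; ring
  have hmF' : mF = t * (1 - g - hF / P + 4 * t ^ 2) := by
    rw [hmF, ht2]; ring
  rw [hmA'] at hlow ⊢
  rw [hmF']
  set a := hA / P with hadef
  set f := hF / P with hfdef
  have hfa : f ≤ a := by rw [hadef, hfdef]; gcongr
  have key : -(12 * s ^ 2) ≤ 1 - g - a := by nlinarith [hspos, mul_pos hspos hspos]
  nlinarith [mul_nonneg (sub_nonneg.mpr hst) (by linarith : (0:ℝ) ≤ 1 - g - a + 12 * s ^ 2),
    mul_nonneg htpos.le (sub_nonneg.mpr hfa),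
    mul_nonneg (mul_self_nonneg (t - s)) (by linarith : (0:ℝ) ≤ t + 2 * s)]
end

section
/- Let ω(V) = (r + m/r²)² where r = r(V) is defined implicitly by V² = r² + k - 2m/r with r > r_m (r_m the largest zero of r² + k - 2m/r). Then dV/dr = √(ω(V))/V, ω'(V) = 2V(1 - 2m/r³), and ω'(V)/V - ω''(V) = -12V² m/(r⁴√(ω(V))). In particular, if m ≤ 0, then ω'(V)/V - ω''(V) ≥ 0. -/
/-!
Differentiating `V² = r² + k - 2m/r` gives `2V = 2(r + m/r²) r'`, so `r' = V/√ω` with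
`√ω = r + m/r²`. The chain rule then cancels this factor in `ω' = 2√ω (1 - 2m/r³) r'`, leaving
`ω' = 2V(1 - 2m/r³)`, and one more derivative gives `ω'' = ω'/V + 12 m V² / (r⁴ √ω)`.
-/

open Real Filter Topology

theorem hasDerivAt_of_comp_eventuallyEq {f φ ψ : ℝ → ℝ} {x φ' ψ' : ℝ}
    (hf : DifferentiableAt ℝ f x) (hφ : HasDerivAt φ φ' (f x)) (hφ' : φ' ≠ 0)
    (hψ : HasDerivAt ψ ψ' x) (h : φ ∘ f =ᶠ[𝓝 x] ψ) : HasDerivAt f (ψ' / φ') x := by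
  have hcomp : φ' * deriv f x = ψ' :=
    (hφ.comp x hf.hasDerivAt).unique (hψ.congr_of_eventuallyEq h)
  rw [← hcomp, mul_div_cancel_left₀ _ hφ']
  exact hf.hasDerivAt

section Kottler

variable {m : ℝ}

theorem ne_zero_of_add_div_sq_ne_zero {x : ℝ} (h : x + m / x ^ 2 ≠ 0) : x ≠ 0 := by
  rintro rfl
  simp at h

theorem hasDerivAt_kottler_potential (k : ℝ) {x : ℝ} (hx : x ≠ 0) :
    HasDerivAt (fun x => x ^ 2 + k - 2 * m / x) (2 * (x + m / x ^ 2)) x :=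
  (((hasDerivAt_pow 2 x).add_const k).sub ((hasDerivAt_const x (2 * m)).div (hasDerivAt_id' x) hx)
    ).congr_deriv (by field_simp; ring)

theorem hasDerivAt_add_div_sq {x : ℝ} (hx : x ≠ 0) :
    HasDerivAt (fun x => x + m / x ^ 2) (1 - 2 * m / x ^ 3) x :=
  ((hasDerivAt_id' x).add ((hasDerivAt_const x m).div (hasDerivAt_pow 2 x) (pow_ne_zero 2 hx))
    ).congr_deriv (by field_simp; ring)

theorem hasDerivAt_one_sub_div_cube {x : ℝ} (hx : x ≠ 0) :
    HasDerivAt (fun x => 1 - 2 * m / x ^ 3) (6 * m / x ^ 4) x :=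
  (((hasDerivAt_const x (2 * m)).div (hasDerivAt_pow 3 x) (pow_ne_zero 3 hx)).const_sub 1
    ).congr_deriv (by field_simp; ring)

variable {k : ℝ} {r : ℝ → ℝ} {s : Set ℝ}

theorem hasDerivAt_of_sq_eq_kottler_potential (hs : IsOpen s)
    (hinv : ∀ v ∈ s, v ^ 2 = r v ^ 2 + k - 2 * m / r v) {v : ℝ} (hv : v ∈ s)
    (hr : DifferentiableAt ℝ r v) (hg : r v + m / r v ^ 2 ≠ 0) :
    HasDerivAt r (v / (r v + m / r v ^ 2)) v := by
  have hinv_near : (fun x => x ^ 2 + k - 2 * m / x) ∘ r =ᶠ[𝓝 v] fun x => x ^ 2 := by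
    filter_upwards [hs.mem_nhds hv] with x hx
    exact (hinv x hx).symm
  convert hasDerivAt_of_comp_eventuallyEq hr
    (hasDerivAt_kottler_potential k (ne_zero_of_add_div_sq_ne_zero hg))
    (mul_ne_zero two_ne_zero hg) (hasDerivAt_pow 2 v) hinv_near using 1
  norm_num [mul_div_mul_left]

theorem hasDerivAt_sq_add_div_sq_comp {v : ℝ} (hr : HasDerivAt r (v / (r v + m / r v ^ 2)) v)
    (hg : r v + m / r v ^ 2 ≠ 0) :
    HasDerivAt (fun x => (r x + m / r x ^ 2) ^ 2) (2 * v * (1 - 2 * m / r v ^ 3)) v := by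
  have hr0 := ne_zero_of_add_div_sq_ne_zero hg
  exact (((hasDerivAt_add_div_sq (m := m) hr0).comp v hr).pow 2).congr_deriv (by
    simp only [Function.comp_apply]
    -- only `g ≠ 0` is needed to cancel; expanding `g` would require `r v ^ 3 + m ≠ 0`
    generalize r v + m / r v ^ 2 = g at hg ⊢
    field_simp
    ring)

theorem hasDerivAt_two_mul_one_sub_div_cube_comp {v : ℝ}
    (hr : HasDerivAt r (v / (r v + m / r v ^ 2)) v) (hg : r v + m / r v ^ 2 ≠ 0) :
    HasDerivAt (fun x => 2 * x * (1 - 2 * m / r x ^ 3))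
      (2 * (1 - 2 * m / r v ^ 3) + 12 * v ^ 2 * m / (r v ^ 4 * (r v + m / r v ^ 2))) v := by
  have hr0 := ne_zero_of_add_div_sq_ne_zero hg
  exact (((hasDerivAt_id' v).const_mul 2).mul
    ((hasDerivAt_one_sub_div_cube (m := m) hr0).comp v hr)).congr_deriv (by
      simp only [Function.comp_apply]
      field_simp
      ring)

end Kottler

theorem omega_derivative_identities_general (m k a : ℝ) (ha : 0 ≤ a) (r : ℝ → ℝ)
    (hsmooth : ∀ v ∈ Set.Ioi a, ContDiffAt ℝ 2 r v)
    (hinv : ∀ v ∈ Set.Ioi a, v ^ 2 = (r v) ^ 2 + k - 2 * m / r v)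
    (hmono : ∀ v ∈ Set.Ioi a, 0 < r v + m / (r v) ^ 2)
    (ω : ℝ → ℝ) (hω : ∀ v, ω v = (r v + m / (r v) ^ 2) ^ 2) :
    ∀ v ∈ Set.Ioi a,
      deriv r v = v / Real.sqrt (ω v) ∧
      deriv ω v = 2 * v * (1 - 2 * m / (r v) ^ 3) ∧
      deriv ω v / v - deriv (deriv ω) v =
        -(12 * v ^ 2 * m) / ((r v) ^ 4 * Real.sqrt (ω v)) ∧
      (m ≤ 0 → 0 ≤ deriv ω v / v - deriv (deriv ω) v) := by
  have hsqrt (v) (hv : v ∈ Set.Ioi a) : √(ω v) = r v + m / r v ^ 2 := by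
    rw [hω, sqrt_sq (hmono v hv).le]
  have hr (v) (hv : v ∈ Set.Ioi a) : HasDerivAt r (v / (r v + m / r v ^ 2)) v :=
    hasDerivAt_of_sq_eq_kottler_potential isOpen_Ioi hinv hv
      ((hsmooth v hv).differentiableAt two_ne_zero) (hmono v hv).ne'
  have hω' (v) (hv : v ∈ Set.Ioi a) : deriv ω v = 2 * v * (1 - 2 * m / r v ^ 3) := by
    rw [funext hω]
    exact (hasDerivAt_sq_add_div_sq_comp (hr v hv) (hmono v hv).ne').deriv
  intro v hv
  have hv0 : v ≠ 0 := (ha.trans_lt hv).ne'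
  have hω'' : deriv (deriv ω) v =
      2 * (1 - 2 * m / r v ^ 3) + 12 * v ^ 2 * m / (r v ^ 4 * (r v + m / r v ^ 2)) :=
    ((hasDerivAt_two_mul_one_sub_div_cube_comp (hr v hv) (hmono v hv).ne').congr_of_eventuallyEq
      (eventually_of_mem (isOpen_Ioi.mem_nhds hv) hω')).deriv
  have hkey : deriv ω v / v - deriv (deriv ω) v =
      -(12 * v ^ 2 * m) / (r v ^ 4 * √(ω v)) := by
    rw [hω'', hω' v hv, hsqrt v hv]
    field_simp
    ring
  refine ⟨by rw [hsqrt v hv]; exact (hr v hv).deriv, hω' v hv, hkey, fun hm => ?_⟩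
  rw [hkey]
  exact div_nonneg (by nlinarith [sq_nonneg v]) (by positivity)

/-- Derivatives of the reference function `ω(V) = (r + m/r²)²`, with `r = r(V)` defined
implicitly by `V² = r² + k - 2m/r`:  `dr/dV = V/√(ω(V))` (i.e. `dV/dr = √ω/V`),
`ω'(V) = 2V(1 - 2m/r³)`, and `ω'(V)/V - ω''(V) = -12V²m/(r⁴√(ω(V)))`.
In particular if `m ≤ 0` then `ω'(V)/V - ω''(V) ≥ 0`. -/
theorem omega_derivative_identities (m k a : ℝ) (ha : 0 ≤ a) (r : ℝ → ℝ)
    (hrpos : ∀ v ∈ Set.Ioi a, 0 < r v)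
    (hsmooth : ∀ v ∈ Set.Ioi a, ContDiffAt ℝ 2 r v)
    (hinv : ∀ v ∈ Set.Ioi a, v ^ 2 = (r v) ^ 2 + k - 2 * m / r v)
    (hmono : ∀ v ∈ Set.Ioi a, 0 < r v + m / (r v) ^ 2)
    (ω : ℝ → ℝ) (hω : ∀ v, ω v = (r v + m / (r v) ^ 2) ^ 2) :
    ∀ v ∈ Set.Ioi a,
      deriv r v = v / Real.sqrt (ω v) ∧
      deriv ω v = 2 * v * (1 - 2 * m / (r v) ^ 3) ∧
      deriv ω v / v - deriv (deriv ω) v =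
        -(12 * v ^ 2 * m) / ((r v) ^ 4 * Real.sqrt (ω v)) ∧
      (m ≤ 0 → 0 ≤ deriv ω v / v - deriv (deriv ω) v) :=
  omega_derivative_identities_general m k a ha r hsmooth hinv hmono ω hω
end

section
/- Let Σ be a closed two-sided stable minimal surface of genus g ≥ 2 in a Riemannian 3-manifold (M, g) with scalar curvature R ≥ -6. Then the area of Σ satisfies |Σ| ≥ (4π/3)(g - 1). -/
open Real MeasureTheory

/-! Integrating the Gauss equation `2K = R - 2 Ric(ν,ν) - |A|²` against `R ≥ -6` and `|A|² ≥ 0`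
gives `-6 |Σ| ≤ 2 ∫ K + 2 ∫ (Ric(ν,ν) + |A|²)`. The second integral is `≤ 0` by stability with
`φ ≡ 1`, and the first is `4π(1 - g)` by Gauss–Bonnet. -/

theorem const_mul_measureReal_univ_le_integral {α : Type*} [MeasurableSpace α] {μ : Measure α}
    [IsFiniteMeasure μ] {f : α → ℝ} {c : ℝ} (hf : Integrable f μ) (h : ∀ x, c ≤ f x) :
    c * μ.real Set.univ ≤ ∫ x, f x ∂μ := by
  simpa [mul_comm] using integral_mono (integrable_const c) hf h

theorem stable_minimal_area_bound_general {α : Type*} [MeasurableSpace α] (ν : Measure α)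
    [IsFiniteMeasure ν] (g : ℝ) (K R Ric A2 : α → ℝ)
    (hK : Integrable K ν) (hRic : Integrable Ric ν)
    (hA2int : Integrable A2 ν)
    (hstable : ∫ x, (Ric x + A2 x) ∂ν ≤ 0)
    (hGauss : ∀ x, 2 * K x = R x - 2 * Ric x - A2 x)
    (hRlow : ∀ x, -6 ≤ R x) (hA2 : ∀ x, 0 ≤ A2 x)
    (hGB : ∫ x, K x ∂ν = 2 * Real.pi * (2 - 2 * g)) :
    4 * Real.pi / 3 * (g - 1) ≤ (ν Set.univ).toReal := by
  have hpointwise : ∀ x, -6 ≤ 2 * K x + 2 * (Ric x + A2 x) := fun x => by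
    linarith [hGauss x, hRlow x, hA2 x]
  have hRicA2 : Integrable (fun x => Ric x + A2 x) ν := hRic.add hA2int
  have hintegrated : -6 * ν.real Set.univ ≤ 2 * ∫ x, K x ∂ν + 2 * ∫ x, (Ric x + A2 x) ∂ν := by
    rw [← integral_const_mul, ← integral_const_mul, ← integral_add (hK.const_mul 2)
      (hRicA2.const_mul 2)]
    exact const_mul_measureReal_univ_le_integral
      ((hK.const_mul 2).add (hRicA2.const_mul 2)) hpointwise
  rw [hGB] at hintegrated
  rw [← measureReal_def]
  linarith

/-- Area bound for stable minimal surfaces: let `Σ` be a closed two-sided stable minimal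
surface of genus `g ≥ 2` (with area measure `ν`, Gauss curvature `K`, ambient scalar
curvature `R ≥ -6`, `Ric = Ric(n,n)`, and `A2 = |A|² ≥ 0`).  Stability with test function
`φ ≡ 1` gives `∫ (Ric + |A|²) ≤ 0`, the Gauss equation with `H = 0` gives
`2K = R - 2Ric - |A|²`, and Gauss–Bonnet gives `∫ K = 2π(2 - 2g)`.  Then
`|Σ| ≥ (4π/3)(g-1)`. -/
theorem stable_minimal_area_bound {α : Type*} [MeasurableSpace α] (ν : Measure α)
    [IsFiniteMeasure ν] (g : ℝ) (hg : 2 ≤ g) (K R Ric A2 : α → ℝ)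
    (hK : Integrable K ν) (hR : Integrable R ν) (hRic : Integrable Ric ν)
    (hA2int : Integrable A2 ν)
    (hstable : ∫ x, (Ric x + A2 x) ∂ν ≤ 0)
    (hGauss : ∀ x, 2 * K x = R x - 2 * Ric x - A2 x)
    (hRlow : ∀ x, -6 ≤ R x) (hA2 : ∀ x, 0 ≤ A2 x)
    (hGB : ∫ x, K x ∂ν = 2 * Real.pi * (2 - 2 * g)) :
    4 * Real.pi / 3 * (g - 1) ≤ (ν Set.univ).toReal :=
  stable_minimal_area_bound_general ν g K R Ric A2 hK hRic hA2int hstable hGauss hRlow hA2 hGB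
end

section
/- Let a ≥ b > 0 and h₁, h₂, c be real numbers with h₁ ≥ h₂ and define m(x, h) = √(x/(16π))·(c - (h - 4x)/(16π)) for x > 0. Then m(a, h₂) - m(b, h₁) ≥ (√a - √b)·(m(b,h₁)/√b + 8(16π)^{-3/2} b). In particular, if m(b,h₁) ≥ -8(16π)^{-3/2} b^{3/2}, then m(a,h₂) ≥ m(b,h₁). -/
open Real

/-- Abstract jump-time monotonicity: for `a ≥ b > 0`, `h₁ ≥ h₂`, and
`m(x,h) = √(x/(16π))·(c - (h - 4x)/(16π))`, one has
`m(a,h₂) - m(b,h₁) ≥ (√a - √b)(m(b,h₁)/√b + 8(16π)^{-3/2} b)`; in particular if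
`m(b,h₁) ≥ -8(16π)^{-3/2} b^{3/2}` then `m(a,h₂) ≥ m(b,h₁)`. -/
theorem hawking_mass_jump_abstract (a b h₁ h₂ c : ℝ)
    (hb : 0 < b) (hab : b ≤ a) (hh : h₂ ≤ h₁)
    (m : ℝ → ℝ → ℝ)
    (hm : ∀ x h, m x h =
      Real.sqrt (x / (16 * Real.pi)) * (c - (h - 4 * x) / (16 * Real.pi))) :
    (Real.sqrt a - Real.sqrt b) *
        (m b h₁ / Real.sqrt b + 8 * b / (16 * Real.pi) ^ ((3 : ℝ) / 2)) ≤
      m a h₂ - m b h₁ ∧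
    (-(8 * b ^ ((3 : ℝ) / 2) / (16 * Real.pi) ^ ((3 : ℝ) / 2)) ≤ m b h₁ →
      m b h₁ ≤ m a h₂) := by
  have hpi := Real.pi_pos
  have h16 : (0:ℝ) < 16 * Real.pi := by positivity
  have ha : (0:ℝ) < a := lt_of_lt_of_le hb hab
  set t := Real.sqrt (16 * Real.pi) with ht
  have htpos : 0 < t := Real.sqrt_pos.2 h16
  have ht2 : t ^ 2 = 16 * Real.pi := Real.sq_sqrt h16.le
  have hP : (16 * Real.pi) ^ ((3:ℝ)/2) = t ^ 3 := by
    rw [ht, Real.sqrt_eq_rpow, ← Real.rpow_natCast ((16*Real.pi) ^ ((1:ℝ)/2)) 3,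
      ← Real.rpow_mul h16.le]
    norm_num
  set sa := Real.sqrt a with hsa
  set sb := Real.sqrt b with hsb
  have hsbpos : 0 < sb := Real.sqrt_pos.2 hb
  have hsapos : 0 < sa := Real.sqrt_pos.2 ha
  have hsa2 : sa ^ 2 = a := Real.sq_sqrt ha.le
  have hsb2 : sb ^ 2 = b := Real.sq_sqrt hb.le
  have hsab : sb ≤ sa := Real.sqrt_le_sqrt hab
  have hb32 : b ^ ((3:ℝ)/2) = sb ^ 3 := by
    rw [hsb, Real.sqrt_eq_rpow, ← Real.rpow_natCast (b ^ ((1:ℝ)/2)) 3,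
      ← Real.rpow_mul hb.le]
    norm_num
  have hma : m a h₂ = sa / t * (c - (h₂ - 4 * a) / t ^ 2) := by
    rw [hm, Real.sqrt_div ha.le, ht2, hsa, ht]
  have hmb : m b h₁ = sb / t * (c - (h₁ - 4 * b) / t ^ 2) := by
    rw [hm, Real.sqrt_div hb.le, ht2, hsb, ht]
  have key : 8 * b * (sa - sb) ≤ sa * (h₁ - h₂ + 4 * (a - b)) := by
    nlinarith [mul_nonneg (mul_nonneg (sub_nonneg.2 hsab) (sub_nonneg.2 hsab))
      (add_pos hsapos (mul_pos two_pos hsbpos)).le,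
      mul_nonneg hsapos.le (sub_nonneg.2 hh)]
  have main : (sa - sb) * (m b h₁ / sb + 8 * b / (16 * Real.pi) ^ ((3:ℝ)/2)) ≤
      m a h₂ - m b h₁ := by
    rw [hma, hmb, hP]
    have hdiff : sa / t * (c - (h₂ - 4 * a) / t ^ 2)
        - sb / t * (c - (h₁ - 4 * b) / t ^ 2)
        - (sa - sb) * ((sb / t * (c - (h₁ - 4 * b) / t ^ 2)) / sb + 8 * b / t ^ 3)
        = (sa * (h₁ - h₂ + 4 * (a - b)) - 8 * b * (sa - sb)) / t ^ 3 := by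
      field_simp
      ring
    have hnn : 0 ≤ (sa * (h₁ - h₂ + 4 * (a - b)) - 8 * b * (sa - sb)) / t ^ 3 :=
      div_nonneg (sub_nonneg.2 key) (by positivity)
    linarith [hdiff ▸ hnn]
  refine ⟨main, fun hge => ?_⟩
  have hfac : 0 ≤ m b h₁ / sb + 8 * b / (16 * Real.pi) ^ ((3:ℝ)/2) := by
    rw [hP]
    rw [hb32, hP] at hge
    rw [← sub_nonneg] at hge ⊢
    have h1 : m b h₁ - -(8 * sb ^ 3 / t ^ 3) ≥ 0 := by linarith
    have h2 : m b h₁ / sb + 8 * b / t ^ 3 - 0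
        = (m b h₁ - -(8 * sb ^ 3 / t ^ 3)) / sb := by
      field_simp
      rw [← hsb2]; ring
    rw [h2]
    exact div_nonneg h1 hsbpos.le
  nlinarith [mul_nonneg (sub_nonneg.2 hsab) hfac, main]
end
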